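/- arXiv:1710.07063 — 2 statements merged into one kernel-verified Lean document; each statement's English description precedes it below -/
import Mathlib

section
/- For a matrix H with singular value decomposition H = U Σ V† and σ_r > σ_{r+1}, the matrix Z* = V_r Σ_r⁻¹ U_r† (where Σ_r⁻¹ = diag(1/σ₁,…,1/σ_r), and U_r, V_r are the first r columns of U, V) minimizes ‖Z H − I‖_F over all matrices Z of rank at most r. -/
/-!
Conjugating by the orthogonal factors, `Z H - I = V (B - I) Vᵀ` with `B = Vᵀ Z U Σ` of rank at
most `r`, while `Z* H - I = V (Π_r - I) Vᵀ` for the coordinate projection `Π_r` onto the first `r`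
coordinates, so `‖Z* H - I‖_F² = N - r`. It remains to see `‖B - I‖_F² ≥ N - rank B`: each column
`B e_j` lies in the range `K` of `B`, hence is at least as far from `e_j` as the orthogonal
projection of `e_j` onto `K`, and these squared distances `‖P_{Kᗮ} e_j‖²` add up to the trace of
`P_{Kᗮ}`, which is `dim Kᗮ = N - rank B`.
-/

open Matrix Module

section InnerProductSpace

variable {ι E : Type*} [Fintype ι] [NormedAddCommGroup E] [InnerProductSpace ℝ E]
  [FiniteDimensional ℝ E]

theorem OrthonormalBasis.sum_norm_sq_starProjection (b : OrthonormalBasis ι ℝ E)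
    (K : Submodule ℝ E) : ∑ i, ‖K.starProjection (b i)‖ ^ 2 = finrank ℝ K := by
  have hproj : LinearMap.IsProj K (K.starProjection : E →ₗ[ℝ] E) :=
    ⟨K.starProjection_apply_mem, fun _ => K.starProjection_eq_self_iff.mpr⟩
  rw [← hproj.trace, LinearMap.trace_eq_sum_inner _ b]
  refine Finset.sum_congr rfl fun i _ => ?_
  rw [ContinuousLinearMap.coe_coe, real_inner_comm]
  simpa using (K.re_inner_starProjection_eq_normSq (b i)).symm

theorem OrthonormalBasis.finrank_orthogonal_le_sum_norm_sub_sq (b : OrthonormalBasis ι ℝ E)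
    {K : Submodule ℝ E} {v : ι → E} (hv : ∀ i, v i ∈ K) :
    (finrank ℝ Kᗮ : ℝ) ≤ ∑ i, ‖v i - b i‖ ^ 2 := by
  rw [← b.sum_norm_sq_starProjection Kᗮ]
  refine Finset.sum_le_sum fun i _ => ?_
  have hdist : ‖b i - K.starProjection (b i)‖ ≤ ‖b i - v i‖ := by
    rw [Submodule.starProjection_minimal]
    exact ciInf_le ⟨0, Set.forall_mem_range.mpr fun _ => norm_nonneg _⟩ (⟨v i, hv i⟩ : K)
  rw [Submodule.starProjection_orthogonal', _root_.sub_apply,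
    one_apply_eq_self, norm_sub_rev (v i)]
  gcongr

end InnerProductSpace

namespace Matrix

variable {m n : Type*} [Fintype m] [Fintype n]

theorem card_sub_rank_le_sum_sq_sub_one [DecidableEq n] (A : Matrix n n ℝ) :
    (Fintype.card n : ℝ) - A.rank ≤ ∑ i, ∑ j, (A - 1) i j ^ 2 := by
  set K := LinearMap.range (toEuclideanLin A)
  have hrank : A.rank = finrank ℝ K :=
    A.rank_eq_finrank_range_toLin (EuclideanSpace.basisFun n ℝ).toBasis
      (EuclideanSpace.basisFun n ℝ).toBasis
  have hcompl : finrank ℝ K + finrank ℝ Kᗮ = Fintype.card n := by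
    rw [K.finrank_add_finrank_orthogonal, finrank_euclideanSpace]
  have hcol : ∀ j, ‖toEuclideanLin A (EuclideanSpace.basisFun n ℝ j)
      - EuclideanSpace.basisFun n ℝ j‖ ^ 2 = ∑ i, (A - 1) i j ^ 2 := by
    intro j
    rw [EuclideanSpace.real_norm_sq_eq]
    refine Finset.sum_congr rfl fun i _ => ?_
    simp [one_apply]
  rw [Finset.sum_comm, ← Finset.sum_congr rfl fun j _ => hcol j, hrank]
  calc (Fintype.card n : ℝ) - finrank ℝ K = finrank ℝ Kᗮ := by
        rw [← hcompl]; push_cast; ring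
    _ ≤ _ := (EuclideanSpace.basisFun n ℝ).finrank_orthogonal_le_sum_norm_sub_sq
        fun j => LinearMap.mem_range_self _ _

theorem sum_sq_eq_trace_transpose_mul (X : Matrix m n ℝ) :
    ∑ i, ∑ j, X i j ^ 2 = (Xᵀ * X).trace := by
  simp only [trace, diag, mul_apply, transpose_apply, sq]
  exact Finset.sum_comm

theorem sum_sq_mul_mul_transpose [DecidableEq n] {V : Matrix m n ℝ} (hV : Vᵀ * V = 1)
    (M : Matrix n n ℝ) :
    ∑ i, ∑ j, (V * M * Vᵀ) i j ^ 2 = ∑ i, ∑ j, M i j ^ 2 := by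
  have : (V * M * Vᵀ)ᵀ * (V * M * Vᵀ) = V * (Mᵀ * M) * Vᵀ := by
    simp only [transpose_mul, transpose_transpose, Matrix.mul_assoc]
    rw [← Matrix.mul_assoc Vᵀ V, hV, Matrix.one_mul]
  rw [sum_sq_eq_trace_transpose_mul, sum_sq_eq_trace_transpose_mul, this, trace_mul_comm,
    ← Matrix.mul_assoc, ← Matrix.mul_assoc, hV, Matrix.one_mul]

theorem sum_sq_mul_mul_transpose_sub_one [DecidableEq n] {V : Matrix n n ℝ} (hV : Vᵀ * V = 1)
    (M : Matrix n n ℝ) :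
    ∑ i, ∑ j, (V * M * Vᵀ - 1) i j ^ 2 = ∑ i, ∑ j, (M - 1) i j ^ 2 := by
  rw [← sum_sq_mul_mul_transpose hV (M - 1), Matrix.mul_sub, Matrix.sub_mul, Matrix.mul_one,
    mul_eq_one_comm.mp hV]

theorem sum_sq_diagonal [DecidableEq n] (d : n → ℝ) :
    ∑ i, ∑ j, diagonal d i j ^ 2 = ∑ i, d i ^ 2 := by
  refine Finset.sum_congr rfl fun i _ => ?_
  rw [Finset.sum_eq_single i (fun j _ hji => by simp [diagonal_apply_ne _ hji.symm]) (by simp),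
    diagonal_apply_eq]

theorem sum_sq_diagonal_indicator_sub_one {N r : ℕ} (hr : r ≤ N) :
    ∑ i, ∑ j, (diagonal (fun i : Fin N => if (i : ℕ) < r then (1 : ℝ) else 0) - 1) i j ^ 2
      = N - r := by
  have hterm : ∀ i : Fin N, ((if (i : ℕ) < r then (1 : ℝ) else 0) - 1) ^ 2
      = 1 - if (i : ℕ) < r then 1 else 0 := fun i => by split_ifs <;> norm_num
  rw [← diagonal_one, diagonal_sub, sum_sq_diagonal]
  simp only [hterm, Finset.sum_sub_distrib, Finset.sum_boole, Fin.card_filter_val_lt,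
    min_eq_right hr]
  simp

end Matrix

theorem truncated_svd_minimizes_inverse_residual_general
    {N : ℕ} (r : ℕ) (hr : r < N)
    (U V : Matrix (Fin N) (Fin N) ℝ) (sigma : Fin N → ℝ)
    (hU : Uᵀ * U = 1) (hV : Vᵀ * V = 1)
    (hpos : ∀ i, 0 < sigma i)
    (H : Matrix (Fin N) (Fin N) ℝ)
    (hH : H = U * Matrix.diagonal sigma * Vᵀ)
    (Zstar : Matrix (Fin N) (Fin N) ℝ)
    (hZstar : Zstar = V * Matrix.diagonal
        (fun i : Fin N => if (i : ℕ) < r then (sigma i)⁻¹ else 0) * Uᵀ) :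
    ∀ Z : Matrix (Fin N) (Fin N) ℝ, Z.rank ≤ r →
      ∑ a, ∑ b, (Zstar * H - 1) a b ^ 2 ≤ ∑ a, ∑ b, (Z * H - 1) a b ^ 2 := by
  intro Z hZ
  set B := Vᵀ * Z * U * diagonal sigma
  have hZH : Z * H = V * B * Vᵀ := by
    simp only [hH, B, ← Matrix.mul_assoc, mul_eq_one_comm.mp hV, Matrix.one_mul]
  have hZstarH :
      Zstar * H = V * diagonal (fun i : Fin N => if (i : ℕ) < r then (1 : ℝ) else 0) * Vᵀ := by
    have hdiag : (fun i : Fin N => (if (i : ℕ) < r then (sigma i)⁻¹ else 0) * sigma i)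
        = fun i : Fin N => if (i : ℕ) < r then (1 : ℝ) else 0 := by
      funext i; split_ifs
      · exact inv_mul_cancel₀ (hpos i).ne'
      · exact zero_mul _
    rw [hZstar, hH, ← hdiag, ← diagonal_mul_diagonal]
    simp only [← Matrix.mul_assoc]
    rw [Matrix.mul_assoc _ Uᵀ U, hU, Matrix.mul_one]
  have hBrank : B.rank ≤ r :=
    (rank_mul_le_left _ _).trans <| (rank_mul_le_left _ _).trans <|
      (rank_mul_le_right _ _).trans hZ
  calc ∑ a, ∑ b, (Zstar * H - 1) a b ^ 2 = N - r := by
        rw [hZstarH, sum_sq_mul_mul_transpose_sub_one hV, sum_sq_diagonal_indicator_sub_one hr.le]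
    _ ≤ N - B.rank := by gcongr
    _ ≤ ∑ a, ∑ b, (B - 1) a b ^ 2 := by simpa using B.card_sub_rank_le_sum_sq_sub_one
    _ = ∑ a, ∑ b, (Z * H - 1) a b ^ 2 := by rw [hZH, sum_sq_mul_mul_transpose_sub_one hV]

/-- Optimal rank-`r` approximation of the inverse (Chung et al., Theorem 3):
for `H = U Σ Vᵀ` with orthogonal `U, V`, positive decreasing singular values `σ`, and
a gap `σ_r > σ_{r+1}` (0-indexed: `σ (r-1) > σ r`), the matrix
`Z* = V_r Σ_r⁻¹ U_rᵀ` minimizes `‖Z H − I‖_F²` over all `Z` of rank at most `r`. -/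
theorem truncated_svd_minimizes_inverse_residual
    {N : ℕ} (r : ℕ) (hr0 : 1 ≤ r) (hr : r < N)
    (U V : Matrix (Fin N) (Fin N) ℝ) (sigma : Fin N → ℝ)
    (hU : Uᵀ * U = 1) (hV : Vᵀ * V = 1)
    (hpos : ∀ i, 0 < sigma i)
    (hord : ∀ i j : Fin N, i ≤ j → sigma j ≤ sigma i)
    (hgap : sigma ⟨r, hr⟩ < sigma ⟨r - 1, Nat.lt_of_le_of_lt (Nat.pred_le r) hr⟩)
    (H : Matrix (Fin N) (Fin N) ℝ)
    (hH : H = U * Matrix.diagonal sigma * Vᵀ)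
    (Zstar : Matrix (Fin N) (Fin N) ℝ)
    (hZstar : Zstar = V * Matrix.diagonal
        (fun i : Fin N => if (i : ℕ) < r then (sigma i)⁻¹ else 0) * Uᵀ) :
    ∀ Z : Matrix (Fin N) (Fin N) ℝ, Z.rank ≤ r →
      ∑ a, ∑ b, (Zstar * H - 1) a b ^ 2 ≤ ∑ a, ∑ b, (Z * H - 1) a b ^ 2 :=
  truncated_svd_minimizes_inverse_residual_general r hr U V sigma hU hV hpos H hH Zstar hZstar
end

section
/- The Marchenko–Pastur density ρ(λ) = (1/(2πσ²cλ))·√((c₊−λ)(λ−c₋)) supported on (c₋, c₊), with c± = σ²(1±√c)², integrates to 1 when 0 < c ≤ 1. -/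
/-!
The integrand `√((b-x)(x-a))/x` has an elementary primitive on `(a, b)`, `0 ≤ a < b`: the
square root itself plus two arcsine terms whose arguments are exactly `∓1` at `x = a, b`.
This gives `∫_a^b √((b-x)(x-a))/x dx = π((a+b)/2 - √(ab)) = π/2 · (√b - √a)²`; integrability
is automatic because the integrand is nonnegative. For `a = c₋`, `b = c₊` and `c ≤ 1`,
`√c₊ - √c₋ = σ(1+√c) - σ(1-√c) = 2σ√c`, so the integral is `2πσ²c`.
-/

open Real Set MeasureTheory intervalIntegral

namespace MarchenkoPastur

variable {a b x : ℝ}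

lemma one_sub_sq_affine (hab : a < b) :
    1 - ((2 * x - a - b) / (b - a)) ^ 2 = (2 / (b - a)) ^ 2 * ((b - x) * (x - a)) := by
  field_simp [(sub_pos.2 hab).ne']
  ring

lemma one_sub_sq_mobius (hab : a < b) (hx : x ≠ 0) :
    1 - (((a + b) * x - 2 * a * b) / ((b - a) * x)) ^ 2
      = (2 / ((b - a) * x)) ^ 2 * (a * b) * ((b - x) * (x - a)) := by
  field_simp [(sub_pos.2 hab).ne']
  ring

lemma hasDerivAt_arcsin_affine (hx : x ∈ Ioo a b) :
    HasDerivAt (fun y => arcsin ((2 * y - a - b) / (b - a))) (1 / √((b - x) * (x - a))) x := by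
  obtain ⟨hax, hxb⟩ := hx
  have hba : 0 < b - a := by linarith
  have hW : 0 < (b - x) * (x - a) := mul_pos (by linarith) (by linarith)
  have hsq : √(1 - ((2 * x - a - b) / (b - a)) ^ 2) = 2 / (b - a) * √((b - x) * (x - a)) := by
    rw [one_sub_sq_affine (by linarith), sqrt_mul (by positivity), sqrt_sq (by positivity)]
  have hpos : 0 < 1 - ((2 * x - a - b) / (b - a)) ^ 2 := by
    rw [one_sub_sq_affine (by linarith)]; positivity
  have harg : HasDerivAt (fun y => (2 * y - a - b) / (b - a)) (2 / (b - a)) x := by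
    simpa using ((((hasDerivAt_id x).const_mul 2).sub_const a).sub_const b).div_const (b - a)
  refine ((hasDerivAt_arcsin (by nlinarith) (by nlinarith)).comp x harg).congr_deriv ?_
  rw [hsq]
  field_simp

lemma hasDerivAt_sqrt_mul_arcsin_mobius (ha : 0 ≤ a) (hx : x ∈ Ioo a b) :
    HasDerivAt (fun y => √(a * b) * arcsin (((a + b) * y - 2 * a * b) / ((b - a) * y)))
      (a * b / (x * √((b - x) * (x - a)))) x := by
  obtain ⟨hax, hxb⟩ := hx
  rcases ha.eq_or_lt with rfl | ha
  · simpa using hasDerivAt_const x (0 : ℝ)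
  have hba : 0 < b - a := by linarith
  have hx0 : 0 < x := by linarith
  have hW : 0 < (b - x) * (x - a) := mul_pos (by linarith) (by linarith)
  have hab : 0 < a * b := by nlinarith
  have hpos : 0 < 1 - (((a + b) * x - 2 * a * b) / ((b - a) * x)) ^ 2 := by
    rw [one_sub_sq_mobius (by linarith) hx0.ne']; positivity
  have hsq : √(1 - (((a + b) * x - 2 * a * b) / ((b - a) * x)) ^ 2)
      = 2 / ((b - a) * x) * √(a * b) * √((b - x) * (x - a)) := by
    rw [one_sub_sq_mobius (by linarith) hx0.ne', sqrt_mul (by positivity), sqrt_mul (by positivity),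
      sqrt_sq (by positivity)]
  have harg : HasDerivAt (fun y => ((a + b) * y - 2 * a * b) / ((b - a) * y))
      (2 * a * b / ((b - a) * x ^ 2)) x := by
    refine ((((hasDerivAt_id' x).const_mul (a + b)).sub_const (2 * a * b)).div
      ((hasDerivAt_id' x).const_mul (b - a)) (by positivity)).congr_deriv ?_
    field_simp
    ring
  refine (((hasDerivAt_arcsin (by nlinarith) (by nlinarith)).comp x harg).const_mul
    √(a * b)).congr_deriv ?_
  rw [hsq]
  field_simp

lemma hasDerivAt_sqrt_sub_mul_sub (hx : x ∈ Ioo a b) :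
    HasDerivAt (fun y => √((b - y) * (y - a)))
      ((a + b - 2 * x) / (2 * √((b - x) * (x - a)))) x := by
  obtain ⟨hax, hxb⟩ := hx
  have hW : 0 < (b - x) * (x - a) := mul_pos (by linarith) (by linarith)
  have hq : HasDerivAt (fun y => (b - y) * (y - a)) (a + b - 2 * x) x :=
    (((hasDerivAt_id' x).const_sub b).mul ((hasDerivAt_id' x).sub_const a)).congr_deriv
      (by ring)
  exact hq.sqrt hW.ne'

noncomputable def primitive (a b x : ℝ) : ℝ :=
  (a + b) / 2 * arcsin ((2 * x - a - b) / (b - a)) + √((b - x) * (x - a))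
    - √(a * b) * arcsin (((a + b) * x - 2 * a * b) / ((b - a) * x))

lemma hasDerivAt_primitive (ha : 0 ≤ a) (hx : x ∈ Ioo a b) :
    HasDerivAt (primitive a b) (√((b - x) * (x - a)) / x) x := by
  have hx0 : 0 < x := ha.trans_lt hx.1
  have hW : 0 < (b - x) * (x - a) := mul_pos (by linarith [hx.2]) (by linarith [hx.1])
  refine ((((hasDerivAt_arcsin_affine hx).const_mul ((a + b) / 2)).add
    (hasDerivAt_sqrt_sub_mul_sub hx)).sub (hasDerivAt_sqrt_mul_arcsin_mobius ha hx)).congr_deriv ?_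
  have := sq_sqrt hW.le
  field_simp
  linear_combination -2 * this

lemma continuousOn_primitive (ha : 0 ≤ a) (hab : a < b) :
    ContinuousOn (primitive a b) (Icc a b) := by
  have hmob : ContinuousOn
      (fun y => √(a * b) * arcsin (((a + b) * y - 2 * a * b) / ((b - a) * y))) (Icc a b) := by
    rcases ha.eq_or_lt with rfl | ha
    · simpa using continuousOn_const
    refine continuousOn_const.mul (continuous_arcsin.comp_continuousOn
      ((by fun_prop : Continuous _).continuousOn.div (by fun_prop : Continuous _).continuousOn ?_))
    exact fun y hy => mul_ne_zero (sub_pos.2 hab).ne' (ha.trans_le hy.1).ne'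
  exact ((by fun_prop : Continuous fun y => (a + b) / 2 * arcsin ((2 * y - a - b) / (b - a))
    + √((b - y) * (y - a))).continuousOn).sub hmob

lemma primitive_right (ha : 0 ≤ a) (hab : a < b) :
    primitive a b b = π / 2 * ((a + b) / 2 - √(a * b)) := by
  have hba : b - a ≠ 0 := (sub_pos.2 hab).ne'
  have hb : b ≠ 0 := (ha.trans_lt hab).ne'
  have h₁ : (2 * b - a - b) / (b - a) = 1 := by rw [div_eq_one_iff_eq hba]; ring
  have h₂ : ((a + b) * b - 2 * a * b) / ((b - a) * b) = 1 := by
    rw [div_eq_one_iff_eq (mul_ne_zero hba hb)]; ring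
  simp only [primitive, h₁, h₂, arcsin_one, sub_self, zero_mul, sqrt_zero]
  ring

lemma primitive_left (ha : 0 ≤ a) (hab : a < b) :
    primitive a b a = -(π / 2 * ((a + b) / 2 - √(a * b))) := by
  have hba : b - a ≠ 0 := (sub_pos.2 hab).ne'
  have h₁ : (2 * a - a - b) / (b - a) = -1 := by rw [div_eq_iff hba]; ring
  have h₂ : √(a * b) * arcsin (((a + b) * a - 2 * a * b) / ((b - a) * a))
      = √(a * b) * -(π / 2) := by
    rcases ha.eq_or_lt with rfl | ha
    -- at `a = 0` the arcsin argument is the junk value `0 / 0 = 0`, but its coefficient vanishes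
    · simp
    have : ((a + b) * a - 2 * a * b) / ((b - a) * a) = -1 := by
      rw [div_eq_iff (mul_ne_zero hba ha.ne')]; ring
    rw [this, arcsin_neg, arcsin_one]
  simp only [primitive, h₁, h₂, arcsin_neg, arcsin_one, sub_self, mul_zero, sqrt_zero]
  ring

theorem integral_sqrt_sub_mul_sub_div_self (ha : 0 ≤ a) (hab : a ≤ b) :
    ∫ x in a..b, √((b - x) * (x - a)) / x = π / 2 * (√b - √a) ^ 2 := by
  rcases hab.eq_or_lt with rfl | hlt
  · simp
  have hderiv := fun x (hx : x ∈ Ioo a b) => hasDerivAt_primitive ha hx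
  have hcont := continuousOn_primitive ha hlt
  have hint : IntervalIntegrable (fun x => √((b - x) * (x - a)) / x) volume a b :=
    (intervalIntegrable_iff_integrableOn_Ioc_of_le hlt.le).2 <|
      integrableOn_deriv_of_nonneg hcont hderiv fun x hx =>
        div_nonneg (sqrt_nonneg _) (ha.trans hx.1.le)
  rw [integral_eq_sub_of_hasDerivAt_of_le hlt.le hcont hderiv hint, primitive_right ha hlt,
    primitive_left ha hlt, sqrt_mul ha]
  linear_combination -(π / 2) * (sq_sqrt ha + sq_sqrt (ha.trans hab))

end MarchenkoPastur

open MarchenkoPastur in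
/-- The Marchenko–Pastur density integrates to 1 when `0 < c ≤ 1`:
`∫_{c₋}^{c₊} √((c₊−λ)(λ−c₋)) / (2πσ²cλ) dλ = 1` with `c± = σ²(1±√c)²`. -/
theorem marchenko_pastur_integrates_to_one
    (σ c : ℝ) (hσ : 0 < σ) (hc0 : 0 < c) (hc1 : c ≤ 1)
    (cm cp : ℝ) (hcm : cm = σ ^ 2 * (1 - Real.sqrt c) ^ 2)
    (hcp : cp = σ ^ 2 * (1 + Real.sqrt c) ^ 2) :
    ∫ lam in cm..cp,
        Real.sqrt ((cp - lam) * (lam - cm)) / (2 * Real.pi * σ ^ 2 * c * lam) = 1 := by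
  have hsc : √c ≤ 1 := sqrt_le_one.2 hc1
  have hsc0 : 0 ≤ √c := sqrt_nonneg c
  have hcm0 : 0 ≤ cm := hcm ▸ by positivity
  have hcmp : cm ≤ cp := by rw [hcm, hcp]; nlinarith
  have hwidth : √cp - √cm = 2 * σ * √c := by
    rw [hcm, hcp, sqrt_mul (by positivity), sqrt_mul (by positivity), sqrt_sq hσ.le,
      sqrt_sq (by linarith), sqrt_sq (by linarith)]
    ring
  simp only [div_mul_eq_div_div_swap _ (2 * π * σ ^ 2 * c)]
  rw [intervalIntegral.integral_div, integral_sqrt_sub_mul_sub_div_self hcm0 hcmp, hwidth,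
    div_eq_one_iff_eq (by positivity)]
  linear_combination 2 * π * σ ^ 2 * sq_sqrt hc0.le
end
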